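/- The function ψ is well defined (the integral converges for every x ∈ ℝ), is infinitely differentiable on ℝ, and for every natural number n and every x ∈ ℝ one has ψ⁽ⁿ⁾(x) > 0, where ψ⁽ⁿ⁾ denotes the n-th derivative; in particular ψ is strictly positive, strictly increasing and strictly convex on ℝ. -/

import Mathlib

open MeasureTheory Real Set Filter

/-- The (positive multiple of the) strictly increasing fundamental solution `ψ_λ` of the
Ornstein–Uhlenbeck equation `(1/2)σ² f'' + θ(μ - x) f' = λ f`, written as the integral
`ψ(x) = ∫₀^∞ t^(λ/θ - 1) exp(-t²/2 + a t (x - μ)) dt` with `a = √(2θ)/σ`. -/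
noncomputable def OUpsi (lam th mu sig : ℝ) (x : ℝ) : ℝ :=
  ∫ t in Set.Ioi (0:ℝ),
    t ^ (lam / th - 1) * Real.exp (-t ^ 2 / 2 + Real.sqrt (2 * th) / sig * t * (x - mu))

noncomputable def OUI (a c q x : ℝ) : ℝ :=
  ∫ t in Set.Ioi (0:ℝ), t ^ q * Real.exp (-t ^ 2 / 2 + a * t * (x - c))

lemma OUI_meas (a q d : ℝ) :
    AEStronglyMeasurable (fun t : ℝ => t ^ q * Real.exp (-t ^ 2 / 2 + a * t * d))
      (volume.restrict (Set.Ioi 0)) := by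
  apply Measurable.aestronglyMeasurable
  fun_prop

lemma OUI_intOn (a q d : ℝ) (hq : -1 < q) :
    IntegrableOn (fun t : ℝ => t ^ q * Real.exp (-t ^ 2 / 2 + a * t * d))
      (Set.Ioi 0) volume := by
  have hbase : IntegrableOn
      (fun t : ℝ => Real.exp ((a*d)^2) * (t ^ q * Real.exp (-(1/4 : ℝ) * t ^ 2)))
      (Set.Ioi 0) volume :=
    (integrableOn_rpow_mul_exp_neg_mul_sq (by norm_num) hq).const_mul _
  refine hbase.mono' (OUI_meas a q d) ?_
  filter_upwards [ae_restrict_mem measurableSet_Ioi] with t ht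
  have ht0 : (0:ℝ) < t := ht
  have h1 : (0:ℝ) ≤ t ^ q := Real.rpow_nonneg ht0.le q
  rw [Real.norm_eq_abs, abs_of_nonneg (by positivity)]
  have hexp : Real.exp (-t ^ 2 / 2 + a * t * d) ≤
      Real.exp ((a*d)^2) * Real.exp (-(1/4 : ℝ) * t ^ 2) := by
    rw [← Real.exp_add]
    apply Real.exp_le_exp.2
    nlinarith [sq_nonneg (a*d - t/2)]
  calc t ^ q * Real.exp (-t ^ 2 / 2 + a * t * d)
      ≤ t ^ q * (Real.exp ((a*d)^2) * Real.exp (-(1/4 : ℝ) * t ^ 2)) :=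
        mul_le_mul_of_nonneg_left hexp h1
    _ = Real.exp ((a*d)^2) * (t ^ q * Real.exp (-(1/4 : ℝ) * t ^ 2)) := by ring

lemma OUI_pos (a c q x : ℝ) (hq : -1 < q) : 0 < OUI a c q x := by
  rw [OUI]
  have hint := OUI_intOn a q (x - c) hq
  rw [setIntegral_pos_iff_support_of_nonneg_ae]
  · have hsub : Set.Ioi (0:ℝ) ⊆ Function.support
        (fun t : ℝ => t ^ q * Real.exp (-t ^ 2 / 2 + a * t * (x - c))) ∩ Set.Ioi 0 := by
      intro t ht
      refine ⟨?_, ht⟩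
      have : (0:ℝ) < t ^ q * Real.exp (-t ^ 2 / 2 + a * t * (x - c)) := by
        have := Real.rpow_pos_of_pos ht q
        positivity
      exact ne_of_gt this
    calc (0:ENNReal) < volume (Set.Ioi (0:ℝ)) := by simp
      _ ≤ _ := measure_mono hsub
  · filter_upwards [ae_restrict_mem measurableSet_Ioi] with t ht
    have := Real.rpow_pos_of_pos ht q
    positivity
  · exact hint

lemma OUI_hasDerivAt (a c q : ℝ) (hq : -1 < q) (ha : 0 < a) (x₀ : ℝ) :
    HasDerivAt (OUI a c q) (a * OUI a c (q + 1) x₀) x₀ := by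
  have key := hasDerivAt_integral_of_dominated_loc_of_deriv_le
    (F := fun (x : ℝ) (t : ℝ) => t ^ q * Real.exp (-t ^ 2 / 2 + a * t * (x - c)))
    (F' := fun (x : ℝ) (t : ℝ) => a * (t ^ (q+1) * Real.exp (-t ^ 2 / 2 + a * t * (x - c))))
    (x₀ := x₀)
    (bound := fun t => a * (t ^ (q+1) * Real.exp (-t ^ 2 / 2 + a * t * (x₀ + 1 - c))))
    (s := Metric.ball x₀ 1) (Metric.ball_mem_nhds x₀ one_pos)
    (Eventually.of_forall fun x => OUI_meas a q (x - c))
    (OUI_intOn a q (x₀ - c) hq)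
    ((OUI_meas a (q+1) (x₀ - c)).const_mul a)
    ?_ (((OUI_intOn a (q+1) (x₀ + 1 - c)) (by linarith)).const_mul a) ?_
  · have h1 : (∫ t in Set.Ioi (0:ℝ),
        a * (t ^ (q+1) * Real.exp (-t ^ 2 / 2 + a * t * (x₀ - c))))
        = a * OUI a c (q+1) x₀ := by
      rw [OUI, integral_const_mul]
    rw [h1] at key
    exact key.2
  · filter_upwards [ae_restrict_mem measurableSet_Ioi] with t ht x hx
    have ht0 : (0:ℝ) < t := ht
    have htq : (0:ℝ) ≤ t ^ (q+1) := Real.rpow_nonneg ht0.le _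
    rw [Real.norm_eq_abs, abs_of_nonneg (by positivity)]
    have hx' : x - c ≤ x₀ + 1 - c := by
      have := abs_lt.1 (by simpa [Real.dist_eq] using Metric.mem_ball.1 hx)
      linarith [this.2]
    have : Real.exp (-t ^ 2 / 2 + a * t * (x - c)) ≤
        Real.exp (-t ^ 2 / 2 + a * t * (x₀ + 1 - c)) := by
      apply Real.exp_le_exp.2
      have hat : 0 ≤ a * t := by positivity
      nlinarith
    exact mul_le_mul_of_nonneg_left (mul_le_mul_of_nonneg_left this htq) ha.le
  · filter_upwards [ae_restrict_mem measurableSet_Ioi] with t ht x _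
    have ht0 : (0:ℝ) < t := ht
    have hd : HasDerivAt (fun x : ℝ => -t ^ 2 / 2 + a * t * (x - c)) (a * t) x := by
      simpa using (((hasDerivAt_id x).sub_const c).const_mul (a * t)).const_add (-t ^ 2 / 2)
    have := (hd.exp.const_mul (t ^ q))
    refine this.congr_deriv ?_
    rw [Real.rpow_add_one (ne_of_gt ht0)]
    ring

lemma OUI_deriv (a c q : ℝ) (hq : -1 < q) (ha : 0 < a) :
    deriv (OUI a c q) = fun x => a * OUI a c (q + 1) x := by
  funext x
  exact (OUI_hasDerivAt a c q hq ha x).deriv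

noncomputable def OUIC (a c q : ℝ) (z : ℂ) : ℂ :=
  ∫ t in Set.Ioi (0:ℝ), ((t ^ q : ℝ) : ℂ) *
    Complex.exp (((-t ^ 2 / 2 : ℝ) : ℂ) + ((a * t : ℝ) : ℂ) * (z - (c : ℂ)))

lemma OUIC_meas (a c q : ℝ) (z : ℂ) :
    AEStronglyMeasurable (fun t : ℝ => ((t ^ q : ℝ) : ℂ) *
      Complex.exp (((-t ^ 2 / 2 : ℝ) : ℂ) + ((a * t : ℝ) : ℂ) * (z - (c : ℂ))))
      (volume.restrict (Set.Ioi 0)) := by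
  apply Measurable.aestronglyMeasurable
  fun_prop

lemma OUIC_norm (a c q : ℝ) (z : ℂ) (t : ℝ) (ht : 0 < t) :
    ‖((t ^ q : ℝ) : ℂ) *
      Complex.exp (((-t ^ 2 / 2 : ℝ) : ℂ) + ((a * t : ℝ) : ℂ) * (z - (c : ℂ)))‖
      = t ^ q * Real.exp (-t ^ 2 / 2 + a * t * (z.re - c)) := by
  simp only [norm_mul, Complex.norm_exp, Complex.norm_real, Real.norm_eq_abs]
  rw [abs_of_nonneg (Real.rpow_nonneg ht.le q)]
  congr 2
  simp [pow_two, Complex.add_re, Complex.mul_re, Complex.sub_re, Complex.ofReal_re,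
    Complex.ofReal_im]

lemma OUIC_intOn (a c q : ℝ) (hq : -1 < q) (z : ℂ) :
    IntegrableOn (fun t : ℝ => ((t ^ q : ℝ) : ℂ) *
      Complex.exp (((-t ^ 2 / 2 : ℝ) : ℂ) + ((a * t : ℝ) : ℂ) * (z - (c : ℂ))))
      (Set.Ioi 0) volume := by
  refine (OUI_intOn a q (z.re - c) hq).mono' (OUIC_meas a c q z) ?_
  filter_upwards [ae_restrict_mem measurableSet_Ioi] with t ht
  rw [OUIC_norm a c q z t ht]

lemma OUIC_hasDerivAt (a c q : ℝ) (hq : -1 < q) (ha : 0 < a) (z₀ : ℂ) :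
    HasDerivAt (OUIC a c q) (((a : ℂ)) * OUIC a c (q + 1) z₀) z₀ := by
  have key := hasDerivAt_integral_of_dominated_loc_of_deriv_le
    (𝕜 := ℂ)
    (F := fun (z : ℂ) (t : ℝ) => ((t ^ q : ℝ) : ℂ) *
      Complex.exp (((-t ^ 2 / 2 : ℝ) : ℂ) + ((a * t : ℝ) : ℂ) * (z - (c : ℂ))))
    (F' := fun (z : ℂ) (t : ℝ) => (a : ℂ) * (((t ^ (q+1) : ℝ) : ℂ) *
      Complex.exp (((-t ^ 2 / 2 : ℝ) : ℂ) + ((a * t : ℝ) : ℂ) * (z - (c : ℂ)))))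
    (x₀ := z₀)
    (bound := fun t => a * (t ^ (q+1) * Real.exp (-t ^ 2 / 2 + a * t * (z₀.re + 1 - c))))
    (s := Metric.ball z₀ 1) (Metric.ball_mem_nhds z₀ one_pos)
    (Eventually.of_forall fun z => OUIC_meas a c q z)
    (OUIC_intOn a c q hq z₀)
    ((OUIC_meas a c (q+1) z₀).const_mul _)
    ?_ (((OUI_intOn a (q+1) (z₀.re + 1 - c)) (by linarith)).const_mul a) ?_
  · have h1 : (∫ t in Set.Ioi (0:ℝ), (a : ℂ) * (((t ^ (q+1) : ℝ) : ℂ) *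
        Complex.exp (((-t ^ 2 / 2 : ℝ) : ℂ) + ((a * t : ℝ) : ℂ) * (z₀ - (c : ℂ)))))
        = (a : ℂ) * OUIC a c (q+1) z₀ := by
      rw [OUIC, integral_const_mul]
    rw [h1] at key
    exact key.2
  · filter_upwards [ae_restrict_mem measurableSet_Ioi] with t ht z hz
    have ht0 : (0:ℝ) < t := ht
    have htq : (0:ℝ) ≤ t ^ (q+1) := Real.rpow_nonneg ht0.le _
    rw [norm_mul, OUIC_norm a c (q+1) z t ht0, Complex.norm_real, Real.norm_eq_abs,
      abs_of_nonneg ha.le]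
    have hz' : z.re - c ≤ z₀.re + 1 - c := by
      have h1 : |(z - z₀).re| ≤ ‖z - z₀‖ := Complex.abs_re_le_norm _
      have h2 : ‖z - z₀‖ < 1 := by simpa [Complex.dist_eq] using Metric.mem_ball.1 hz
      have := abs_lt.1 (lt_of_le_of_lt h1 h2)
      have : z.re - z₀.re < 1 := by simpa [Complex.sub_re] using this.2
      linarith
    have hexp : Real.exp (-t ^ 2 / 2 + a * t * (z.re - c)) ≤
        Real.exp (-t ^ 2 / 2 + a * t * (z₀.re + 1 - c)) := by
      apply Real.exp_le_exp.2
      have hat : 0 ≤ a * t := by positivity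
      nlinarith
    exact mul_le_mul_of_nonneg_left (mul_le_mul_of_nonneg_left hexp htq) ha.le
  · filter_upwards [ae_restrict_mem measurableSet_Ioi] with t ht z _
    have ht0 : (0:ℝ) < t := ht
    have hd : HasDerivAt (fun z : ℂ => ((-t ^ 2 / 2 : ℝ) : ℂ) + ((a * t : ℝ) : ℂ) * (z - (c : ℂ)))
        (((a * t : ℝ) : ℂ)) z := by
      simpa only [mul_one, id] using
        (((hasDerivAt_id z).sub_const (c : ℂ)).const_mul ((a * t : ℝ) : ℂ)).const_add
        (((-t ^ 2 / 2 : ℝ) : ℂ))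
    have := (hd.cexp.const_mul (((t ^ q : ℝ) : ℂ)))
    refine this.congr_deriv ?_
    rw [Real.rpow_add_one (ne_of_gt ht0)]
    push_cast
    ring

lemma OUI_eq_re (a c q : ℝ) (x : ℝ) : OUI a c q x = (OUIC a c q (x : ℂ)).re := by
  rw [OUI, OUIC]
  have : ∀ t ∈ Set.Ioi (0:ℝ), ((t ^ q : ℝ) : ℂ) *
      Complex.exp (((-t ^ 2 / 2 : ℝ) : ℂ) + ((a * t : ℝ) : ℂ) * ((x : ℂ) - (c : ℂ)))
      = ((t ^ q * Real.exp (-t ^ 2 / 2 + a * t * (x - c)) : ℝ) : ℂ) := by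
    intro t _
    rw [← Complex.ofReal_sub, ← Complex.ofReal_mul, ← Complex.ofReal_add, ← Complex.ofReal_exp,
      ← Complex.ofReal_mul]
  rw [setIntegral_congr_fun measurableSet_Ioi this]
  have h : (∫ t in Set.Ioi (0:ℝ), ((t ^ q * Real.exp (-t ^ 2 / 2 + a * t * (x - c)) : ℝ) : ℂ))
      = ((∫ t in Set.Ioi (0:ℝ), t ^ q * Real.exp (-t ^ 2 / 2 + a * t * (x - c)) : ℝ) : ℂ) :=
    integral_ofReal
  rw [h, Complex.ofReal_re]

lemma OUI_analytic (a c q : ℝ) (hq : -1 < q) (ha : 0 < a) :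
    AnalyticOnNhd ℝ (OUI a c q) Set.univ := by
  have hC : AnalyticOnNhd ℂ (OUIC a c q) Set.univ :=
    Complex.analyticOnNhd_univ_iff_differentiable.2
      (fun z => (OUIC_hasDerivAt a c q hq ha z).differentiableAt)
  have hR : AnalyticOnNhd ℝ (OUIC a c q) Set.univ := hC.restrictScalars
  have h1 : AnalyticOnNhd ℝ (fun x : ℝ => OUIC a c q (x : ℂ)) Set.univ :=
    hR.comp (Complex.ofRealCLM.analyticOnNhd Set.univ) (Set.mapsTo_univ _ _)
  have h2 : AnalyticOnNhd ℝ (fun x : ℝ => (OUIC a c q (x : ℂ)).re) Set.univ :=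
    (Complex.reCLM.analyticOnNhd Set.univ).comp h1 (Set.mapsTo_univ _ _)
  have : OUI a c q = fun x : ℝ => (OUIC a c q (x : ℂ)).re := funext (OUI_eq_re a c q)
  rw [this]
  exact h2

lemma OUI_iteratedDeriv (a c q : ℝ) (hq : -1 < q) (ha : 0 < a) (n : ℕ) :
    iteratedDeriv n (OUI a c q) = fun x => a ^ n * OUI a c (q + n) x := by
  induction n with
  | zero => simp [iteratedDeriv_zero]
  | succ n ih =>
    rw [iteratedDeriv_succ, ih]
    funext x
    have hqn : -1 < q + n := by
      have : (0:ℝ) ≤ n := Nat.cast_nonneg n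
      linarith
    have := ((OUI_hasDerivAt a c (q + n) hqn ha x).const_mul (a ^ n)).deriv
    rw [this]
    push_cast
    ring_nf

/-- `ψ` is well defined (the integral converges for every `x`), it is `C^∞`
on `ℝ`, and `ψ⁽ⁿ⁾(x) > 0` for every `n` and `x`; in particular `ψ` is strictly positive,
strictly increasing and strictly convex on `ℝ`. -/
theorem statement3 (lam th mu sig : ℝ)
    (hlam : 0 < lam) (hth : 0 < th) (hmu : 0 < mu) (hsig : 0 < sig) :
    (∀ x : ℝ, IntegrableOn
      (fun t : ℝ => t ^ (lam / th - 1) *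
        Real.exp (-t ^ 2 / 2 + Real.sqrt (2 * th) / sig * t * (x - mu)))
      (Set.Ioi 0) volume) ∧
    ContDiff ℝ (⊤ : ℕ∞) (OUpsi lam th mu sig) ∧
    (∀ (n : ℕ) (x : ℝ), 0 < iteratedDeriv n (OUpsi lam th mu sig) x) ∧
    (∀ x : ℝ, 0 < OUpsi lam th mu sig x) ∧
    StrictMono (OUpsi lam th mu sig) ∧
    StrictConvexOn ℝ Set.univ (OUpsi lam th mu sig) := by
  have ha : 0 < Real.sqrt (2 * th) / sig :=
    div_pos (Real.sqrt_pos.2 (by linarith)) hsig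
  have hq : -1 < lam / th - 1 := by
    have : 0 < lam / th := div_pos hlam hth
    linarith
  have hpsi : OUpsi lam th mu sig = OUI (Real.sqrt (2 * th) / sig) mu (lam / th - 1) := rfl
  have h3 : ∀ (n : ℕ) (x : ℝ), 0 < iteratedDeriv n (OUpsi lam th mu sig) x := by
    intro n x
    rw [hpsi, OUI_iteratedDeriv _ _ _ hq ha n]
    have hqn : -1 < lam / th - 1 + n := by
      have : (0:ℝ) ≤ n := Nat.cast_nonneg n
      linarith
    exact mul_pos (pow_pos ha n) (OUI_pos _ _ _ _ hqn)
  have h2 : ContDiff ℝ (⊤ : ℕ∞) (OUpsi lam th mu sig) := by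
    rw [hpsi]
    exact (OUI_analytic _ _ _ hq ha).contDiff
  refine ⟨?_, h2, h3, ?_, ?_, ?_⟩
  · exact fun x => OUI_intOn (Real.sqrt (2 * th) / sig) (lam / th - 1) (x - mu) hq
  · intro x
    rw [hpsi]
    exact OUI_pos _ _ _ _ hq
  · apply strictMono_of_deriv_pos
    intro x
    rw [hpsi, OUI_deriv _ _ _ hq ha]
    exact mul_pos ha (OUI_pos _ _ _ _ (by linarith))
  · refine strictConvexOn_of_deriv2_pos convex_univ ?_ ?_
    · exact h2.continuous.continuousOn
    · intro x _
      have := h3 2 x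
      rwa [iteratedDeriv_eq_iterate] at this
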